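/- arXiv:0904.3411 — 2 statements merged into one kernel-verified Lean document; each statement's English description precedes it below -/
import Mathlib

section
/- Let G be a finite group with a symmetric generating set S, and let (V, ρ) be a finite-dimensional unitary representation of G with no nonzero G-invariant vector. If for some α > 0 the property I(α, G, S) holds (every S-almost-invariant vector is G-almost-invariant with constant α), then for every unit vector v in V there exists s ∈ S with ‖ρ(s)v − v‖ ≥ 1/(2α). -/
/-!
Averaging a unit vector `v` over `G` gives a `G`-invariant vector, hence `0`; so `v` itself is
the mean of the displacements `v - ρ g v`, and some `g` moves `v` by at least `‖v‖ = 1`.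
Property `I(α, G, S)` with `δ = 1/(2α)` then forbids every `s ∈ S` from moving `v` by less
than `1/(2α)`, since otherwise every `g` would move it by less than `1/2`.
-/

open Finset

section OrbitAverage

variable {𝕜 G V : Type*} [RCLike 𝕜] [Group G] [Fintype G]
  [NormedAddCommGroup V] [NormedSpace 𝕜 V] (ρ : G →* (V ≃ₗᵢ[𝕜] V))

noncomputable def orbitAverage (v : V) : V :=
  (Fintype.card G : 𝕜)⁻¹ • ∑ g, ρ g v

theorem map_orbitAverage (h : G) (v : V) : ρ h (orbitAverage ρ v) = orbitAverage ρ v := by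
  have hsum : ρ h (∑ g, ρ g v) = ∑ g, ρ g v := by
    rw [map_sum, ← Equiv.sum_comp (Equiv.mulLeft h) (fun g => ρ g v)]
    simp [map_mul]
  simp only [orbitAverage, map_smul, hsum]

theorem norm_orbitAverage_sub_le (v : V) :
    ‖orbitAverage ρ v - v‖ ≤ (Fintype.card G : ℝ)⁻¹ * ∑ g, ‖ρ g v - v‖ := by
  have hcard : (Fintype.card G : 𝕜) ≠ 0 := Nat.cast_ne_zero.mpr Fintype.card_ne_zero
  have hv : v = (Fintype.card G : 𝕜)⁻¹ • ∑ _g : G, v := by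
    rw [sum_const, card_univ, ← Nat.cast_smul_eq_nsmul 𝕜, smul_smul, inv_mul_cancel₀ hcard,
      one_smul]
  calc ‖orbitAverage ρ v - v‖ = ‖(Fintype.card G : 𝕜)⁻¹ • ∑ g, (ρ g v - v)‖ := by
        rw [sum_sub_distrib, smul_sub, ← hv, orbitAverage]
    _ = (Fintype.card G : ℝ)⁻¹ * ‖∑ g, (ρ g v - v)‖ := by simp [norm_smul]
    _ ≤ (Fintype.card G : ℝ)⁻¹ * ∑ g, ‖ρ g v - v‖ := by gcongr; exact norm_sum_le _ _

theorem exists_norm_le_norm_map_sub (hnoinv : ∀ v : V, (∀ g : G, ρ g v = v) → v = 0) (v : V) :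
    ∃ g, ‖v‖ ≤ ‖ρ g v - v‖ := by
  by_contra! hsmall
  have hzero : orbitAverage ρ v = 0 := hnoinv _ fun h => map_orbitAverage ρ h v
  have hcard : (0 : ℝ) < Fintype.card G := Nat.cast_pos.mpr Fintype.card_pos
  have := norm_orbitAverage_sub_le ρ v
  rw [hzero, zero_sub, norm_neg] at this
  have hsum : ∑ g, ‖ρ g v - v‖ < ∑ _g : G, ‖v‖ :=
    sum_lt_sum_of_nonempty univ_nonempty fun g _ => hsmall g
  rw [sum_const, card_univ, nsmul_eq_mul] at hsum
  have : (Fintype.card G : ℝ)⁻¹ * ∑ g, ‖ρ g v - v‖ < ‖v‖ := by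
    rw [inv_mul_lt_iff₀ hcard]; exact hsum
  linarith

end OrbitAverage

theorem stmt0_general {G : Type*} [Group G] [Fintype G]
    {V : Type*} [NormedAddCommGroup V] [InnerProductSpace ℂ V]
    (ρ : G →* (V ≃ₗᵢ[ℂ] V)) (S : Set G)
    (α : ℝ) (hα : 0 < α)
    (hI : ∀ (v : V) (δ : ℝ), 0 < δ → (∀ s ∈ S, ‖ρ s v - v‖ < δ) →
      ∀ g : G, ‖ρ g v - v‖ < α * δ)
    (hnoinv : ∀ v : V, (∀ g : G, ρ g v = v) → v = 0) :
    ∀ v : V, ‖v‖ = 1 → ∃ s ∈ S, 1 / (2 * α) ≤ ‖ρ s v - v‖ := by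
  intro v hv
  by_contra! hS
  obtain ⟨g, hg⟩ := exists_norm_le_norm_map_sub ρ hnoinv v
  have hmove : ‖ρ g v - v‖ < α * (1 / (2 * α)) := hI v _ (by positivity) hS g
  have hhalf : α * (1 / (2 * α)) = 1 / 2 := by field_simp
  linarith

/-- If a finite group `G` with symmetric generating set `S` satisfies
property `I(α, G, S)` for a finite-dimensional unitary representation `(V, ρ)` with
no nonzero invariant vector, then every unit vector moves by at least `1/(2α)`
under some `s ∈ S`. -/
theorem stmt0 {G : Type*} [Group G] [Fintype G]
    {V : Type*} [NormedAddCommGroup V] [InnerProductSpace ℂ V] [FiniteDimensional ℂ V]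
    (ρ : G →* (V ≃ₗᵢ[ℂ] V)) (S : Set G)
    (hsymm : ∀ s ∈ S, s⁻¹ ∈ S) (hgen : Subgroup.closure S = ⊤)
    (α : ℝ) (hα : 0 < α)
    (hI : ∀ (v : V) (δ : ℝ), 0 < δ → (∀ s ∈ S, ‖ρ s v - v‖ < δ) →
      ∀ g : G, ‖ρ g v - v‖ < α * δ)
    (hnoinv : ∀ v : V, (∀ g : G, ρ g v = v) → v = 0) :
    ∀ v : V, ‖v‖ = 1 → ∃ s ∈ S, 1 / (2 * α) ≤ ‖ρ s v - v‖ :=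
  stmt0_general ρ S α hα hI hnoinv
end

section
/- Let X be a connected k-regular finite graph, Δ = (1/k)A its normalized adjacency operator. If every eigenvalue λ of Δ other than 1 satisfies |λ| ≤ 1 − η for some η > 0, then for every subset A of vertices with |A| ≤ |X|/2, the vertex boundary satisfies |∂A| ≥ ε|A| for some ε > 0 depending only on η. -/
/-!
Let `f = 1_A - |A|/n`. It is orthogonal to the constants, which on a connected graph form the
`1`-eigenspace of `Δ = A/k`, so expanding `f` in an orthonormal eigenbasis of `Δ` the spectral gap
gives `η ‖f‖² ≤ ⟪f, (1 - Δ) f⟫ = k⁻¹ ⟪1_A, L 1_A⟫`, with `L = k - A` the Laplacian. The quadratic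
form of `L` at `1_A` counts the edges leaving `A`, and each of them ends in `∂A`, a set whose
vertices carry at most `k` edges each; hence `η ‖f‖² ≤ |∂A|`. Finally
`‖f‖² = |A| (1 - |A|/n) ≥ |A|/2`, so `ε = η/2` works.
-/

open Matrix Finset

theorem Matrix.IsHermitian.dotProduct_mulVec_le {n : Type*} [Fintype n] [DecidableEq n]
    {M : Matrix n n ℝ} (hM : M.IsHermitian) {c : ℝ} {f : n → ℝ}
    (h : ∀ (lam : ℝ) (v : n → ℝ), v ≠ 0 → M *ᵥ v = lam • v → lam ≤ c ∨ v ⬝ᵥ f = 0) :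
    f ⬝ᵥ (M *ᵥ f) ≤ c * (f ⬝ᵥ f) := by
  set b := hM.eigenvectorBasis
  have hparseval : ∀ g : n → ℝ, f ⬝ᵥ g = ∑ i, (b i ⬝ᵥ f) * (b i ⬝ᵥ g) := fun g => by
    have := b.sum_inner_mul_inner (WithLp.toLp 2 f) (WithLp.toLp 2 g)
    simp only [EuclideanSpace.inner_eq_star_dotProduct, star_trivial] at this
    simpa [dotProduct_comm] using this.symm
  have hsymm : Mᵀ = M := by simpa [conjTranspose_eq_transpose_of_trivial] using hM.eq
  have heigen : ∀ i, b i ⬝ᵥ (M *ᵥ f) = hM.eigenvalues i * (b i ⬝ᵥ f) := fun i => by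
    rw [dotProduct_mulVec, ← mulVec_transpose, hsymm, hM.mulVec_eigenvectorBasis, smul_dotProduct,
      smul_eq_mul]
  rw [hparseval, hparseval f, mul_sum]
  refine sum_le_sum fun i _ => ?_
  have hb : (b i : n → ℝ) ≠ 0 := fun h0 => b.orthonormal.ne_zero i (by ext x; exact congrFun h0 x)
  rw [heigen]
  rcases h _ _ hb (hM.mulVec_eigenvectorBasis i) with hle | hzero
  · nlinarith [sq_nonneg (b i ⬝ᵥ f)]
  · simp [hzero]

theorem Finset.sum_indicator_one {V : Type*} [Fintype V] (s : Finset V) :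
    ∑ x, (s : Set V).indicator (1 : V → ℝ) x = #s := by
  rw [sum_indicator_subset _ (subset_univ s)]
  simp

theorem Finset.dotProduct_indicator_sub_const_self {V : Type*} [Fintype V] (s : Finset V)
    (c : ℝ) :
    (fun x => (s : Set V).indicator 1 x - c) ⬝ᵥ (fun x => (s : Set V).indicator 1 x - c) =
      #s * (1 - 2 * c) + Fintype.card V * c ^ 2 := by
  have hpoint : ∀ x, ((s : Set V).indicator (1 : V → ℝ) x - c) * ((s : Set V).indicator 1 x - c)
      = (s : Set V).indicator 1 x * (1 - 2 * c) + c ^ 2 := fun x => by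
    by_cases hx : x ∈ s <;> simp [hx] <;> ring
  simp [dotProduct, hpoint, sum_add_distrib, ← sum_mul, sum_indicator_one]

namespace SimpleGraph

variable {V : Type*} [Fintype V] {G : SimpleGraph V} [DecidableRel G.Adj]

theorem IsRegularOfDegree.sum_sum_ite_adj {k : ℕ} (hreg : G.IsRegularOfDegree k) (h : V → ℝ) :
    ∑ i, ∑ j, (if G.Adj i j then h i else 0) = k * ∑ i, h i := by
  rw [mul_sum]
  refine sum_congr rfl fun i _ => ?_
  rw [sum_ite, sum_const_zero, add_zero, sum_const, ← neighborFinset_eq_filter,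
    card_neighborFinset_eq_degree, hreg i, nsmul_eq_mul]

variable [DecidableEq V]

variable (G) in
def vertexBoundary (s : Finset V) : Finset V := {y | y ∉ s ∧ ∃ x ∈ s, G.Adj x y}

theorem IsRegularOfDegree.adjMatrix_eq_sub_lapMatrix {R : Type*} [Ring R] {k : ℕ}
    (hreg : G.IsRegularOfDegree k) : G.adjMatrix R = (k : R) • 1 - G.lapMatrix R := by
  have hdeg : G.degMatrix R = (k : R) • 1 := by
    rw [degMatrix, smul_one_eq_diagonal]
    simp only [hreg _]
  rw [lapMatrix, hdeg, sub_sub_cancel]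

theorem Connected.dotProduct_eq_zero_of_lapMatrix_mulVec_eq_zero (hconn : G.Connected)
    {v f : V → ℝ} (hv : G.lapMatrix ℝ *ᵥ v = 0) (hf : ∑ x, f x = 0) : v ⬝ᵥ f = 0 := by
  obtain ⟨x₀⟩ := hconn.nonempty
  have hconst : ∀ x, v x = v x₀ := fun x =>
    (lapMatrix_mulVec_eq_zero_iff_forall_reachable G).1 hv x x₀ (hconn x x₀)
  simp only [dotProduct, hconst, ← mul_sum, hf, mul_zero]

theorem Connected.mul_dotProduct_le_of_spectral_gap (hconn : G.Connected) {k : ℕ} (hk : 0 < k)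
    (hreg : G.IsRegularOfDegree k) {η : ℝ}
    (hgap : ∀ (lam : ℝ) (f : V → ℝ), f ≠ 0 →
      ((k : ℝ)⁻¹ • G.adjMatrix ℝ) *ᵥ f = lam • f → lam = 1 ∨ |lam| ≤ 1 - η)
    {f : V → ℝ} (hf : ∑ x, f x = 0) :
    k * η * (f ⬝ᵥ f) ≤ f ⬝ᵥ (G.lapMatrix ℝ *ᵥ f) := by
  have hk₀ : (0 : ℝ) < k := Nat.cast_pos.2 hk
  have hM : (k : ℝ)⁻¹ • G.adjMatrix ℝ = 1 - (k : ℝ)⁻¹ • G.lapMatrix ℝ := by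
    rw [hreg.adjMatrix_eq_sub_lapMatrix, smul_sub, smul_smul, inv_mul_cancel₀ hk₀.ne', one_smul]
  have hherm : ((k : ℝ)⁻¹ • G.adjMatrix ℝ).IsHermitian :=
    (isHermitian_adjMatrix ℝ G).smul (IsSelfAdjoint.all _)
  have hquad := hherm.dotProduct_mulVec_le (c := 1 - η) (f := f) fun lam v hv hlam => by
    rcases hgap lam v hv hlam with rfl | habs
    · right
      refine hconn.dotProduct_eq_zero_of_lapMatrix_mulVec_eq_zero ?_ hf
      rw [hM, sub_mulVec, one_mulVec, one_smul, sub_eq_self, smul_mulVec,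
        smul_eq_zero] at hlam
      exact hlam.resolve_left (inv_ne_zero hk₀.ne')
    · exact .inl ((le_abs_self lam).trans habs)
  rw [hM, sub_mulVec, one_mulVec, dotProduct_sub, smul_mulVec, dotProduct_smul,
    smul_eq_mul] at hquad
  field_simp at hquad
  linarith

theorem dotProduct_lapMatrix_mulVec_sub_const (f : V → ℝ) (c : ℝ) :
    (fun x => f x - c) ⬝ᵥ (G.lapMatrix ℝ *ᵥ fun x => f x - c) =
      f ⬝ᵥ (G.lapMatrix ℝ *ᵥ f) := by
  simp only [← toLinearMap₂'_apply', lapMatrix_toLinearMap₂', sub_sub_sub_cancel_right]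

theorem IsRegularOfDegree.dotProduct_lapMatrix_mulVec_indicator_le {k : ℕ}
    (hreg : G.IsRegularOfDegree k) (s : Finset V) :
    (s : Set V).indicator 1 ⬝ᵥ (G.lapMatrix ℝ *ᵥ (s : Set V).indicator 1) ≤
      k * #(G.vertexBoundary s) := by
  set g : V → ℝ := (s : Set V).indicator 1
  set b : V → ℝ := (G.vertexBoundary s : Set V).indicator 1
  -- an edge leaving `s` has one endpoint in the boundary
  have hcut : ∀ i j, (if G.Adj i j then (g i - g j) ^ 2 else 0) ≤
      (if G.Adj i j then b i else 0) + (if G.Adj j i then b j else 0) := by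
    intro i j
    by_cases hij : G.Adj i j
    · have hji := hij.symm
      simp only [hij, hji, if_true, g, b, Set.indicator_apply, mem_coe, vertexBoundary,
        mem_filter, mem_univ, true_and, Pi.one_apply]
      split_ifs <;> grind
    · have hji : ¬G.Adj j i := fun h => hij h.symm
      simp [hij, hji]
  have hb : ∑ i, b i = #(G.vertexBoundary s) := by
    simp [b, Set.indicator_apply]
  rw [← toLinearMap₂'_apply', lapMatrix_toLinearMap₂', div_le_iff₀ two_pos]
  calc ∑ i, ∑ j, (if G.Adj i j then (g i - g j) ^ 2 else 0)
      ≤ ∑ i, ∑ j, ((if G.Adj i j then b i else 0) + (if G.Adj j i then b j else 0)) :=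
        sum_le_sum fun i _ => sum_le_sum fun j _ => hcut i j
    _ = k * #(G.vertexBoundary s) * 2 := by
        rw [sum_congr rfl fun i _ => sum_add_distrib, sum_add_distrib, sum_comm (f := fun i j =>
          if G.Adj j i then b j else 0), hreg.sum_sum_ite_adj, hb]
        ring

end SimpleGraph

/-- A spectral gap for the normalized adjacency operator of a connected
`k`-regular graph implies vertex expansion: for every `η > 0` there is `ε > 0`
(depending only on `η`) such that any set of at most half the vertices has vertex
boundary of size at least `ε` times its size. -/
theorem stmt8 (η : ℝ) (hη : 0 < η) :
    ∃ ε : ℝ, 0 < ε ∧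
      ∀ (V : Type) [Fintype V] (G : SimpleGraph V) [DecidableRel G.Adj] (k : ℕ),
        0 < k → G.Connected → G.IsRegularOfDegree k →
        (∀ (lam : ℝ) (f : V → ℝ), f ≠ 0 →
            Matrix.mulVec ((k : ℝ)⁻¹ • G.adjMatrix ℝ) f = lam • f → lam = 1 ∨ |lam| ≤ 1 - η) →
        ∀ A : Set V, 2 * A.ncard ≤ Fintype.card V →
          ε * A.ncard ≤ ({y : V | y ∉ A ∧ ∃ x ∈ A, G.Adj x y}.ncard : ℝ) := by
  refine ⟨η / 2, by positivity, fun V _ G _ k hk hconn hreg hgap A hA => ?_⟩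
  classical
  obtain ⟨s, rfl⟩ := A.toFinite.exists_finset_coe
  have hboundary : {y | y ∉ (s : Set V) ∧ ∃ x ∈ (s : Set V), G.Adj x y} = G.vertexBoundary s := by
    ext; simp [SimpleGraph.vertexBoundary]
  rw [Set.ncard_coe_finset] at hA
  rw [hboundary, Set.ncard_coe_finset, Set.ncard_coe_finset]
  set c : ℝ := #s / Fintype.card V
  set f : V → ℝ := fun x => (s : Set V).indicator 1 x - c
  have hn : (0 : ℝ) < Fintype.card V := Nat.cast_pos.2 (@Fintype.card_pos _ _ hconn.nonempty)
  have hsum : ∑ x, f x = 0 := by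
    simp [f, c, sum_sub_distrib, sum_indicator_one, mul_div_cancel₀ _ hn.ne']
  have hnorm : #s / 2 ≤ f ⬝ᵥ f := by
    rw [Finset.dotProduct_indicator_sub_const_self]
    have : (2 * #s : ℝ) ≤ Fintype.card V := by exact_mod_cast hA
    simp only [c]
    field_simp
    nlinarith
  have hpoincare := hconn.mul_dotProduct_le_of_spectral_gap hk hreg hgap hsum
  rw [SimpleGraph.dotProduct_lapMatrix_mulVec_sub_const] at hpoincare
  have hbound := hpoincare.trans (hreg.dotProduct_lapMatrix_mulVec_indicator_le s)
  rw [mul_assoc] at hbound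
  calc η / 2 * #s = η * (#s / 2) := by ring
    _ ≤ η * (f ⬝ᵥ f) := by gcongr
    _ ≤ #(G.vertexBoundary s) := le_of_mul_le_mul_left hbound (Nat.cast_pos.2 hk)
end
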